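/- Fix ε ∈ ℂ and nonzero β1,β2 ∈ ℂ. The map R(β1,β2) : (x,y) ↦ (p,q) on ℂ²×ℂ² defined by p=(y¹+P, y²−P) and q=(x¹−P, x²+Q), where P = (1/β1 − 1/β2)·(β1·β2·y²·x¹ + ε)/(β2·y² − β1·x¹) and Q = (1/β2 − 1/β1)·(β1·β2·x²·(y²−x¹−x²) − ε)/(β1·x² + β2·(y²−x¹−x²)), is unitary: for all x,y ∈ ℂ² with all occurring denominators nonzero, if R(β1,β2)(x,y) = (p,q) then R(β2,β1)(q,p) = (y,x). -/
import Mathlib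

noncomputable section

abbrev X2 : Type := ℂ × ℂ

def Pval (ε β1 β2 : ℂ) (z : X2 × X2) : ℂ :=
  (1 / β1 - 1 / β2) * (β1 * β2 * z.2.2 * z.1.1 + ε) / (β2 * z.2.2 - β1 * z.1.1)

def Qval (ε β1 β2 : ℂ) (z : X2 × X2) : ℂ :=
  (1 / β2 - 1 / β1) * (β1 * β2 * z.1.2 * (z.2.2 - z.1.1 - z.1.2) - ε) /
    (β1 * z.1.2 + β2 * (z.2.2 - z.1.1 - z.1.2))

def R (ε β1 β2 : ℂ) (z : X2 × X2) : X2 × X2 :=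
  ((z.2.1 + Pval ε β1 β2 z, z.2.2 - Pval ε β1 β2 z),
   (z.1.1 - Pval ε β1 β2 z, z.1.2 + Qval ε β1 β2 z))

def D (β1 β2 : ℂ) (z : X2 × X2) : Prop :=
  β2 * z.2.2 - β1 * z.1.1 ≠ 0 ∧ β1 * z.1.2 + β2 * (z.2.2 - z.1.1 - z.1.2) ≠ 0

/-- Unitarity of the Yang–Baxter map obtained from system `E4` (with parameter
`ε` and nonzero `β1, β2`): if `R(β1,β2)(x,y) = (p,q)` then `R(β2,β1)(q,p) = (y,x)`,
wherever all occurring denominators are nonzero. -/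
theorem unitarity_E4 (ε β1 β2 : ℂ) (hβ1 : β1 ≠ 0) (hβ2 : β2 ≠ 0) (x y : X2)
    (h1 : D β1 β2 (x, y))
    (h2 : D β2 β1 ((R ε β1 β2 (x, y)).2, (R ε β1 β2 (x, y)).1)) :
    R ε β2 β1 ((R ε β1 β2 (x, y)).2, (R ε β1 β2 (x, y)).1) = (y, x) := by
  obtain ⟨x1, x2⟩ := x
  obtain ⟨y1, y2⟩ := y
  obtain ⟨ha, hb⟩ := h1
  obtain ⟨hc, hd⟩ := h2
  simp only [R, Pval, Qval, D] at hc hd ⊢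
  set P := (1 / β1 - 1 / β2) * (β1 * β2 * y2 * x1 + ε) / (β2 * y2 - β1 * x1) with hPdef
  set Q := (1 / β2 - 1 / β1) * (β1 * β2 * x2 * (y2 - x1 - x2) - ε) /
      (β1 * x2 + β2 * (y2 - x1 - x2)) with hQdef
  have hPD : P * (β2 * y2 - β1 * x1) = (1 / β1 - 1 / β2) * (β1 * β2 * y2 * x1 + ε) := by
    rw [hPdef]; exact div_mul_cancel₀ _ ha
  have hQD : Q * (β1 * x2 + β2 * (y2 - x1 - x2)) =
      (1 / β2 - 1 / β1) * (β1 * β2 * x2 * (y2 - x1 - x2) - ε) := by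
    rw [hQdef]; exact div_mul_cancel₀ _ hb
  have keyP : (1 / β2 - 1 / β1) * (β2 * β1 * (y2 - P) * (x1 - P) + ε) /
      (β1 * (y2 - P) - β2 * (x1 - P)) = -P := by
    rw [div_eq_iff hc]
    field_simp at hPD ⊢
    linear_combination hPD
  have keyQ : (1 / β1 - 1 / β2) *
      (β2 * β1 * (x2 + Q) * (y2 - P - (x1 - P) - (x2 + Q)) - ε) /
      (β2 * (x2 + Q) + β1 * (y2 - P - (x1 - P) - (x2 + Q))) = -Q := by
    rw [div_eq_iff hd]
    field_simp at hQD ⊢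
    linear_combination hQD
  rw [keyP, keyQ]
  norm_num
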